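/- For any two distinct rational unit directions ξ, ξ' ∈ S^{d−1} ∩ Q^d (d ≥ 3) and any v ∈ R^d, the set of v' ∈ R^d such that the periodized lines ℓ(v,ξ) := v + R ξ + Z^d and ℓ(v',ξ') := v' + R ξ' + Z^d intersect has Lebesgue measure zero; that is, L^d( R^d \ { v' ∈ R^d : ℓ(v,ξ) ∩ ℓ(v',ξ') = ∅ } ) = 0. -/

import Mathlib

open MeasureTheory Set
open scoped ENNReal NNReal RealInnerProductSpace BigOperators Pointwise

noncomputable section

abbrev Rd (d : ℕ) := EuclideanSpace ℝ (Fin d)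
/-- The integer vector `k` viewed as a point of `ℝ^d`. -/
def intVec {d : ℕ} (k : Fin d → ℤ) : Rd d := WithLp.toLp 2 (fun i => (k i : ℝ))

/-- `ξ` has rational coordinates. -/
def RationalVector {d : ℕ} (ξ : Rd d) : Prop := ∀ i, ∃ q : ℚ, ξ i = (q : ℝ)

/-- The ℤ^d-periodization of the line through `v` with direction `ξ`. -/
def perLine {d : ℕ} (v ξ : Rd d) : Set (Rd d) :=
  {x | ∃ (t : ℝ) (k : Fin d → ℤ), x = v + t • ξ + intVec k}

/-! The lines `ℓ(v,ξ)` and `ℓ(v',ξ')` can only meet if `v' - v ∈ span {ξ, ξ'} + ℤ^d`, a countable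
union of translates of a subspace of dimension at most `2`, which is null once `d ≥ 3`. -/

theorem intVec_sub {d : ℕ} (k k' : Fin d → ℤ) : intVec (k - k') = intVec k - intVec k' := by
  ext i
  simp [intVec]

theorem Submodule.span_pair_ne_top {K E : Type*} [DivisionRing K] [AddCommGroup E] [Module K E]
    [FiniteDimensional K E] (hE : 2 < Module.finrank K E) (x y : E) :
    Submodule.span K {x, y} ≠ ⊤ := by
  classical
  intro h
  have hle : Module.finrank K (Submodule.span K ({x, y} : Set E)) ≤ 2 :=
    (finrank_span_le_card _).trans (by simpa using Finset.card_le_two)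
  rw [h, finrank_top] at hle
  omega

theorem measure_iUnion_vadd_submodule_eq_zero {E ι : Type*} [NormedAddCommGroup E]
    [NormedSpace ℝ E] [MeasurableSpace E] [BorelSpace E] [FiniteDimensional ℝ E] [Countable ι]
    (μ : Measure E) [μ.IsAddHaarMeasure] {V : Submodule ℝ E} (hV : V ≠ ⊤) (a : ι → E) :
    μ (⋃ i, a i +ᵥ (V : Set E)) = 0 :=
  measure_iUnion_null fun i => by
    rw [measure_vadd]
    exact Measure.addHaar_submodule μ V hV

theorem setOf_perLine_inter_nonempty_subset {d : ℕ} (v ξ ξ' : Rd d) :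
    {v' : Rd d | (perLine v ξ ∩ perLine v' ξ').Nonempty} ⊆
      ⋃ k : Fin d → ℤ, (v + intVec k) +ᵥ (Submodule.span ℝ {ξ, ξ'} : Set (Rd d)) := by
  rintro v' ⟨x, ⟨t, k, rfl⟩, ⟨t', k', hx'⟩⟩
  refine mem_iUnion.2 ⟨k - k', Set.mem_vadd_set.2 ⟨t • ξ - t' • ξ', ?_, ?_⟩⟩
  · exact Submodule.sub_mem _
      (Submodule.smul_mem _ _ (Submodule.subset_span (by simp)))
      (Submodule.smul_mem _ _ (Submodule.subset_span (by simp)))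
  · rw [vadd_eq_add, intVec_sub]
    linear_combination (norm := module) hx'

theorem ae_disjoint_periodized_lines_general (d : ℕ) (hd : 3 ≤ d) (ξ ξ' : Rd d) (v : Rd d) :
    volume {v' : Rd d | (perLine v ξ ∩ perLine v' ξ').Nonempty} = 0 := by
  have hplane : Submodule.span ℝ {ξ, ξ'} ≠ ⊤ :=
    Submodule.span_pair_ne_top (by rw [finrank_euclideanSpace_fin]; omega) ξ ξ'
  exact measure_mono_null (setOf_perLine_inter_nonempty_subset v ξ ξ')
    (measure_iUnion_vadd_submodule_eq_zero volume hplane _)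

/-- For distinct rational unit directions `ξ ≠ ξ'` in dimension `d ≥ 3` and any `v`, the set
of `v'` for which the periodized lines `ℓ(v,ξ)` and `ℓ(v',ξ')` intersect is Lebesgue-null. -/
theorem ae_disjoint_periodized_lines (d : ℕ) (hd : 3 ≤ d) (ξ ξ' : Rd d)
    (hξ : ‖ξ‖ = 1) (hξ' : ‖ξ'‖ = 1) (hq : RationalVector ξ) (hq' : RationalVector ξ')
    (hne : ξ ≠ ξ') (v : Rd d) :
    volume {v' : Rd d | (perLine v ξ ∩ perLine v' ξ').Nonempty} = 0 :=
  ae_disjoint_periodized_lines_general d hd ξ ξ' v
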